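/- The metric is an eigenvector of the braiding matrix in both index pairs: Σ_{a,b} C_{ab} R̂^{ab}_{cd} = ε r^{ε−N} C_{cd} and Σ_{c,d} C^{cd} R̂^{ab}_{cd} = ε r^{ε−N} C^{ab}, for all free indices. -/

import Mathlib

/-!
Both contractions reduce to one scalar identity. The metric is supported on `b = a'`, and `R`
does not mix the span of the vectors `e_a ⊗ e_{a'}` with the span of the other basis vectors, so
away from `d = c'` (resp. `b = a'`) both sides vanish. On it, contracting over either index pair
gives `C_{cc'} K(c)`, where (`diagPart c - (r - r⁻¹) ε tailSum c` below)
`K(c) = ε r^{2ρ_c - 1} (1 - δ^{c n₂}) + δ^{c n₂} + (r - r⁻¹) θ^{c'c} - ε (r - r⁻¹) Σ_{b > c} r^{2ρ_b}`.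
Passing from `c` to `c + 1` changes the first three terms by exactly the summand
`ε (r - r⁻¹) r^{2ρ_{c+1}}` (away from the middle of `ρ` this is `r^{x+1} = r^{x-1} + (r - r⁻¹) r^x`;
the middle indices are checked by hand), so `K` is constant, equal to its value `ε r^{ε-N}` at
the last index.
-/

open Finset

/-- The three series `B_n` (N = 2n+1, ε = +1), `C_n` (N = 2n, ε = −1),
`D_n` (N = 2n, ε = +1). -/
inductive BCDSeries : Type
  | B : BCDSeries
  | C : BCDSeries
  | D : BCDSeries
deriving DecidableEq

/-- Kronecker delta with values in `ℂ`. -/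
def kd {α : Type*} [DecidableEq α] (a b : α) : ℂ := if a = b then 1 else 0

/-- The dimension `N` of the fundamental representation. -/
def bigN : BCDSeries → ℕ → ℕ
  | BCDSeries.B, n => 2 * n + 1
  | BCDSeries.C, n => 2 * n
  | BCDSeries.D, n => 2 * n

/-- The sign `ε`: `+1` for the orthogonal series `B_n, D_n`, `−1` for the symplectic
series `C_n`. -/
def epsZ : BCDSeries → ℤ
  | BCDSeries.B => 1
  | BCDSeries.C => -1
  | BCDSeries.D => 1

/-- The sign `ε` as a complex number. -/
noncomputable def epsC (S : BCDSeries) : ℂ := (epsZ S : ℂ)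

/-- `ε_a` (for the 0-based index `i`, paper index `i+1`): `+1` for `B_n, D_n`; for `C_n`
it is `+1` for paper index `≤ n` and `−1` for paper index `> n`. -/
def epsA (S : BCDSeries) (n i : ℕ) : ℂ :=
  match S with
  | BCDSeries.C => if i < n then 1 else -1
  | _ => 1

/-- `2·ρ_a ∈ ℤ` for the 0-based index `i` (paper index `i+1`); `ρ` is the vector
`(N/2−1, …, 1/2, 0, −1/2, …, −N/2+1)` for `B_n`, `(N/2, …, 1, −1, …, −N/2)` for `C_n`,
and `(N/2−1, …, 1, 0, 0, −1, …, −N/2+1)` for `D_n`. -/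
def twoRho (S : BCDSeries) (n i : ℕ) : ℤ :=
  match S with
  | BCDSeries.B =>
      if i < n then (2 * n + 1 : ℤ) - 2 * (i + 1)
      else if i = n then 0
      else (2 * n + 3 : ℤ) - 2 * (i + 1)
  | BCDSeries.C =>
      if i < n then (2 * n + 2 : ℤ) - 2 * (i + 1) else (2 * n : ℤ) - 2 * (i + 1)
  | BCDSeries.D =>
      if i < n then (2 * n : ℤ) - 2 * (i + 1) else (2 * n + 2 : ℤ) - 2 * (i + 1)

/-- `δ^{a n₂}` as a complex number: for `B_n` it is 1 iff the 0-based index `i` equals `n`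
(paper index `n₂ = (N+1)/2 = n+1`); for `C_n, D_n` there is no index `n₂` and it is 0. -/
def isN2 (S : BCDSeries) (n i : ℕ) : ℂ :=
  match S with
  | BCDSeries.B => if i = n then 1 else 0
  | _ => 0

/-- The primed index `a' = N+1−a` (in 0-based indexing, `a' = N−1−a`). -/
def pr {N : ℕ} (a : Fin N) : Fin N := ⟨N - 1 - a.val, by have := a.isLt; omega⟩

/-- The metric `C_{ab} = ε_a r^{−ρ_a} δ_{a b'}`, where `r^ρ := s^{2ρ}` for a fixed square
root `s` of `r`. -/
noncomputable def Cmet (S : BCDSeries) (n : ℕ) (s : ℂ)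
    (a b : Fin (bigN S n)) : ℂ :=
  epsA S n a.val * s ^ (-(twoRho S n a.val)) * kd b (pr a)

/-- The inverse metric `C^{ab} = ε C_{ab}`. -/
noncomputable def Cup (S : BCDSeries) (n : ℕ) (s : ℂ)
    (a b : Fin (bigN S n)) : ℂ :=
  epsC S * Cmet S n s a b

/-- The multiparametric `B,C,D` R-matrix
`R^{ab}_{cd} = δ^a_c δ^b_d [r/q_{ab} + (r−1)δ^{ab} + (r⁻¹−1)δ^{a b'}](1−δ^{a n₂})
  + δ^a_{n₂} δ^b_{n₂} δ^{n₂}_c δ^{n₂}_d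
  + (r−r⁻¹)[θ^{ab} δ^b_c δ^a_d − ε_a ε_c θ^{ac} r^{ρ_a−ρ_c} δ^{a'b} δ_{c'd}]`,
with `θ^{ab} = 1` iff `a > b`, and `r^ρ := s^{2ρ}`.  Indices are 0-based. -/
noncomputable def Rbcd (S : BCDSeries) (n : ℕ) (r s : ℂ)
    (q : Fin (bigN S n) → Fin (bigN S n) → ℂ)
    (a b c d : Fin (bigN S n)) : ℂ :=
  kd a c * kd b d *
      (r / q a b + (r - 1) * kd a b + (r⁻¹ - 1) * kd b (pr a)) * (1 - isN2 S n a.val)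
    + isN2 S n a.val * isN2 S n b.val * isN2 S n c.val * isN2 S n d.val
    + (r - r⁻¹) *
        ((if b < a then (1 : ℂ) else 0) * kd b c * kd a d
          - epsA S n a.val * epsA S n c.val * (if c < a then (1 : ℂ) else 0) *
              s ^ (twoRho S n a.val - twoRho S n c.val) * kd b (pr a) * kd d (pr c))

/-- `R̂^{ab}_{cd} := R^{ba}_{cd}`. -/
noncomputable def RbcdHat (S : BCDSeries) (n : ℕ) (r s : ℂ)
    (q : Fin (bigN S n) → Fin (bigN S n) → ℂ)
    (a b c d : Fin (bigN S n)) : ℂ :=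
  Rbcd S n r s q b a c d

/-- The R-matrix with all deformation parameters inverted, `R_{q⁻¹,r⁻¹}` (also the chosen
square root `s` of `r` is replaced by `s⁻¹`). -/
noncomputable def RbcdInv (S : BCDSeries) (n : ℕ) (r s : ℂ)
    (q : Fin (bigN S n) → Fin (bigN S n) → ℂ)
    (a b c d : Fin (bigN S n)) : ℂ :=
  Rbcd S n r⁻¹ s⁻¹ (fun x y => (q x y)⁻¹) a b c d

section Involution

variable {N : ℕ}

lemma pr_val (a : Fin N) : (pr a).val = N - 1 - a.val := rfl

lemma pr_val_add_val_add_one (a : Fin N) : (pr a).val + a.val + 1 = N := by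
  have := a.isLt
  rw [pr_val]; omega

lemma pr_pr (a : Fin N) : pr (pr a) = a := by
  have := a.isLt
  ext; simp only [pr_val]; omega

lemma pr_involutive : Function.Involutive (@pr N) := pr_pr

lemma pr_lt_pr {a b : Fin N} : pr a < pr b ↔ b < a := by
  have := a.isLt
  simp only [Fin.lt_def, pr_val]; omega

lemma eq_pr_comm {a b : Fin N} : a = pr b ↔ b = pr a :=
  ⟨fun h => h ▸ (pr_pr b).symm, fun h => h ▸ (pr_pr a).symm⟩

lemma lt_pr_comm {a b : Fin N} : a < pr b ↔ b < pr a := by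
  conv_lhs => rw [← pr_pr a]
  exact pr_lt_pr

lemma eq_of_pr_eq_self {a b : Fin N} (ha : pr a = a) (hb : pr b = b) : a = b := by
  have ha' := congrArg Fin.val ha
  have hb' := congrArg Fin.val hb
  simp only [pr_val] at ha' hb'
  ext; omega

lemma sum_comp_pr {M : Type*} [AddCommMonoid M] (f : Fin N → M) :
    ∑ a, f (pr a) = ∑ a, f a :=
  Equiv.sum_comp (pr_involutive.toPerm _) f

lemma sum_ite_lt_eq_sum_Ico {M : Type*} [AddCommMonoid M] (c : Fin N) (f : ℕ → M) :
    ∑ b : Fin N, (if c < b then f b else 0) = ∑ j ∈ Ico (c.val + 1) N, f j := by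
  simp only [Fin.lt_def]
  rw [Fin.sum_univ_eq_sum_range (fun j => if c.val < j then f j else 0), ← sum_filter]
  congr 1
  ext j
  simp only [mem_filter, mem_range, mem_Ico]
  omega

end Involution

section KroneckerDelta

variable {α : Type*} [DecidableEq α]

@[simp] lemma kd_self (a : α) : kd a a = 1 := if_pos rfl

lemma kd_comm (a b : α) : kd a b = kd b a := by
  simp only [kd, eq_comm]

lemma kd_mul_self (a b : α) : kd a b * kd a b = kd a b := by
  unfold kd; split_ifs <;> norm_num

lemma sum_mul_kd [Fintype α] (f : α → ℂ) (b : α) : ∑ a, f a * kd a b = f b := by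
  simp [kd]

lemma sum_kd_mul [Fintype α] (f : α → ℂ) (b : α) : ∑ a, kd a b * f a = f b := by
  simp [kd]

lemma kd_pr_left {N : ℕ} (a b : Fin N) : kd (pr a) b = kd a (pr b) := by
  simp only [kd, eq_comm (a := pr a), eq_pr_comm]

end KroneckerDelta

section Series

variable (S : BCDSeries) (n : ℕ)

lemma epsA_mul_self (i : ℕ) : epsA S n i * epsA S n i = 1 := by
  cases S <;> simp only [epsA] <;> (try split_ifs) <;> norm_num

lemma twoRho_pr (a : Fin (bigN S n)) : twoRho S n (pr a) = -twoRho S n a := by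
  have hv := pr_val_add_val_add_one a
  generalize (pr a).val = p at hv ⊢
  generalize a.val = x at hv ⊢
  cases S <;> simp only [bigN, twoRho] at hv ⊢ <;> split_ifs <;> omega

lemma epsA_pr (a : Fin (bigN S n)) : epsA S n (pr a) = epsC S * epsA S n a := by
  have hv := pr_val_add_val_add_one a
  generalize (pr a).val = p at hv ⊢
  generalize a.val = x at hv ⊢
  cases S <;> simp only [bigN, epsA, epsC, epsZ] at hv ⊢
  case C =>
    by_cases h : x < n <;> by_cases h' : p < n <;> simp only [h, h', ↓reduceIte] <;>
      first | omega | norm_num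
  all_goals norm_num

/-- `δ^{a n₂}` is the indicator of the fixed point of `a ↦ a'`, which exists only for `B_n`. -/
lemma isN2_eq_kd_pr (a : Fin (bigN S n)) : isN2 S n a = kd a (pr a) := by
  have key : a = pr a ↔ a.val = n ∧ S = BCDSeries.B := by
    have hv := pr_val_add_val_add_one a
    rw [Fin.ext_iff]
    generalize (pr a).val = p at hv ⊢
    generalize a.val = x at hv ⊢
    cases S <;> simp only [bigN, reduceCtorEq, and_true, and_false, iff_false] at hv ⊢ <;> omega
  cases S <;> simp [isN2, kd, key]

lemma isN2_pr (a : Fin (bigN S n)) : isN2 S n (pr a) = isN2 S n a := by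
  rw [isN2_eq_kd_pr, isN2_eq_kd_pr, pr_pr, kd_comm]

lemma isN2_mul_self (a : Fin (bigN S n)) : isN2 S n a * isN2 S n a = isN2 S n a := by
  rw [isN2_eq_kd_pr, kd_mul_self]

lemma kd_pr_mul_one_sub_isN2 (a : Fin (bigN S n)) : kd a (pr a) * (1 - isN2 S n a) = 0 := by
  rw [isN2_eq_kd_pr, mul_sub, mul_one, kd_mul_self, sub_self]

lemma isN2_mul_isN2 (a c : Fin (bigN S n)) :
    isN2 S n a * isN2 S n c = isN2 S n a * kd a c := by
  simp only [isN2_eq_kd_pr, kd]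
  split_ifs with ha hc hac hac' <;> first | rfl | norm_num
  · exact hac (eq_of_pr_eq_self ha.symm hc.symm)
  · exact hc (hac' ▸ ha)

end Series

lemma sub_sum_Ico_eq_of_eq_add {M : Type*} [AddCommGroup M] {f g : ℕ → M} {N i : ℕ}
    (hfg : ∀ j, j + 1 < N → f j = f (j + 1) + g (j + 1)) (hi : i < N) :
    f i - ∑ j ∈ Ico (i + 1) N, g j = f (N - 1) := by
  have hg : ∑ j ∈ Ico (i + 1) N, g j = ∑ k ∈ range (N - 1 - i), (f (i + k) - f (i + (k + 1))) := by
    rw [sum_Ico_eq_sum_range, show N - (i + 1) = N - 1 - i by omega]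
    refine sum_congr rfl fun k hk => ?_
    rw [mem_range] at hk
    rw [hfg (i + k) (by omega), add_right_comm, ← add_assoc]
    abel
  rw [hg, sum_range_sub' (fun k => f (i + k)), add_zero, show i + (N - 1 - i) = N - 1 by omega,
    sub_sub_cancel]

section Eigenvalue

variable (S : BCDSeries) (n : ℕ) (r : ℂ)

noncomputable def diagPart (i : ℕ) : ℂ :=
  epsC S * r ^ (twoRho S n i - 1) * (1 - isN2 S n i) + isN2 S n i
    + (r - r⁻¹) * if i < bigN S n - 1 - i then 1 else 0

noncomputable def tailSum (i : ℕ) : ℂ :=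
  ∑ j ∈ Ico (i + 1) (bigN S n), r ^ twoRho S n j

variable {S n r}

lemma diagPart_eq_add_of_twoRho_eq (hr : r ≠ 0) {i : ℕ}
    (hρ : twoRho S n i = twoRho S n (i + 1) + 2) (h₀ : isN2 S n i = 0) (h₁ : isN2 S n (i + 1) = 0)
    (hθ : i < bigN S n - 1 - i ↔ i + 1 < bigN S n - 1 - (i + 1)) :
    diagPart S n r i = diagPart S n r (i + 1) + (r - r⁻¹) * epsC S * r ^ twoRho S n (i + 1) := by
  simp only [diagPart, hρ, h₀, h₁, if_congr hθ rfl rfl, add_sub_assoc, zpow_add₀ hr, zpow_sub₀ hr]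
  field_simp
  ring

lemma diagPart_B_eq_add_below_mid (i : ℕ) :
    diagPart .B (i + 1) r i
      = diagPart .B (i + 1) r (i + 1) + (r - r⁻¹) * epsC .B * r ^ twoRho .B (i + 1) (i + 1) := by
  have h₀ : twoRho .B (i + 1) i = 1 := by simp only [twoRho]; split_ifs <;> omega
  have h₁ : twoRho .B (i + 1) (i + 1) = 0 := by simp only [twoRho]; split_ifs <;> omega
  simp only [diagPart, h₀, h₁, isN2, bigN, epsC, epsZ, show ¬i = i + 1 by omega,
    show i < 2 * (i + 1) + 1 - 1 - i by omega,
    show ¬i + 1 < 2 * (i + 1) + 1 - 1 - (i + 1) by omega, ↓reduceIte]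
  norm_num

lemma diagPart_B_mid_eq_add (hr : r ≠ 0) (n : ℕ) :
    diagPart .B n r n = diagPart .B n r (n + 1) + (r - r⁻¹) * epsC .B * r ^ twoRho .B n (n + 1) := by
  have h₀ : twoRho .B n n = 0 := by simp only [twoRho]; split_ifs <;> omega
  have h₁ : twoRho .B n (n + 1) = -1 := by simp only [twoRho]; split_ifs <;> omega
  simp only [diagPart, h₀, h₁, isN2, bigN, epsC, epsZ, show ¬n + 1 = n by omega,
    show ¬n < 2 * n + 1 - 1 - n by omega, show ¬n + 1 < 2 * n + 1 - 1 - (n + 1) by omega,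
    ↓reduceIte]
  norm_num
  field_simp
  ring

lemma diagPart_C_eq_add_below_mid (hr : r ≠ 0) (i : ℕ) :
    diagPart .C (i + 1) r i
      = diagPart .C (i + 1) r (i + 1) + (r - r⁻¹) * epsC .C * r ^ twoRho .C (i + 1) (i + 1) := by
  have h₀ : twoRho .C (i + 1) i = 2 := by simp only [twoRho]; split_ifs <;> omega
  have h₁ : twoRho .C (i + 1) (i + 1) = -2 := by simp only [twoRho]; split_ifs <;> omega
  simp only [diagPart, h₀, h₁, isN2, bigN, epsC, epsZ, show i < 2 * (i + 1) - 1 - i by omega,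
    show ¬i + 1 < 2 * (i + 1) - 1 - (i + 1) by omega, ↓reduceIte]
  norm_num
  field_simp
  ring

lemma diagPart_D_eq_add_below_mid (i : ℕ) :
    diagPart .D (i + 1) r i
      = diagPart .D (i + 1) r (i + 1) + (r - r⁻¹) * epsC .D * r ^ twoRho .D (i + 1) (i + 1) := by
  have h₀ : twoRho .D (i + 1) i = 0 := by simp only [twoRho]; split_ifs <;> omega
  have h₁ : twoRho .D (i + 1) (i + 1) = 0 := by simp only [twoRho]; split_ifs <;> omega
  simp only [diagPart, h₀, h₁, isN2, bigN, epsC, epsZ, show i < 2 * (i + 1) - 1 - i by omega,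
    show ¬i + 1 < 2 * (i + 1) - 1 - (i + 1) by omega, ↓reduceIte]
  norm_num

lemma diagPart_eq_add (hr : r ≠ 0) {i : ℕ} (hi : i + 1 < bigN S n) :
    diagPart S n r i = diagPart S n r (i + 1) + (r - r⁻¹) * epsC S * r ^ twoRho S n (i + 1) := by
  by_cases hmid : i + 1 = n ∨ (S = .B ∧ i = n)
  · rcases hmid with rfl | ⟨rfl, rfl⟩
    · cases S
      · exact diagPart_B_eq_add_below_mid i
      · exact diagPart_C_eq_add_below_mid hr i
      · exact diagPart_D_eq_add_below_mid i
    · exact diagPart_B_mid_eq_add hr i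
  · apply diagPart_eq_add_of_twoRho_eq hr <;> cases S <;>
      simp only [twoRho, isN2, bigN, true_and, reduceCtorEq, false_and, or_false] at hi hmid ⊢ <;>
      (try split_ifs) <;> first | rfl | omega

lemma diagPart_last (hN : 0 < bigN S n) :
    diagPart S n r (bigN S n - 1) = epsC S * r ^ (epsZ S - bigN S n) := by
  obtain ⟨m, hm⟩ : ∃ m, bigN S n = m + 1 := ⟨bigN S n - 1, by omega⟩
  rw [hm, Nat.add_sub_cancel]
  by_cases h₀ : S = .B ∧ n = 0
  · obtain ⟨rfl, rfl⟩ := h₀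
    obtain rfl : m = 0 := by simp only [bigN] at *; omega
    norm_num [diagPart, twoRho, isN2, bigN, epsC, epsZ]
  have hδ : isN2 S n m = 0 := by
    cases S <;> simp only [isN2, bigN, true_and] at *
    split_ifs <;> first | rfl | omega
  have hρ : twoRho S n m - 1 = epsZ S - (m + 1 : ℕ) := by
    cases S <;> simp only [twoRho, bigN, epsZ, true_and] at * <;> split_ifs <;> push_cast <;> omega
  have hθ : ¬m < bigN S n - 1 - m := by omega
  simp only [diagPart, hδ, hρ, hθ, ↓reduceIte]
  ring

lemma diagPart_sub_tailSum (hr : r ≠ 0) {i : ℕ} (hi : i < bigN S n) :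
    diagPart S n r i - (r - r⁻¹) * epsC S * tailSum S n r i
      = epsC S * r ^ (epsZ S - bigN S n) := by
  rw [tailSum, mul_sum, ← diagPart_last (by omega)]
  exact sub_sum_Ico_eq_of_eq_add (fun j hj => diagPart_eq_add hr hj) hi

end Eigenvalue

section Metric

variable {S : BCDSeries} {n : ℕ} {r s : ℂ} {q : Fin (bigN S n) → Fin (bigN S n) → ℂ}

noncomputable def metricCoeff (S : BCDSeries) (n : ℕ) (s : ℂ) (a : Fin (bigN S n)) : ℂ :=
  epsA S n a * s ^ (-twoRho S n a)

lemma Cmet_eq_metricCoeff_mul_kd (a b : Fin (bigN S n)) :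
    Cmet S n s a b = metricCoeff S n s a * kd b (pr a) := rfl

lemma zpow_eq_zpow_two_mul (hs : s ^ 2 = r) (k : ℤ) : r ^ k = s ^ (2 * k) := by
  rw [zpow_mul, ← hs, zpow_ofNat]

lemma metricCoeff_pr (hs0 : s ≠ 0) (hs : s ^ 2 = r) (a : Fin (bigN S n)) :
    metricCoeff S n s (pr a) = epsC S * r ^ twoRho S n a * metricCoeff S n s a := by
  simp only [metricCoeff, epsA_pr, twoRho_pr, neg_neg, zpow_eq_zpow_two_mul hs]
  rw [mul_mul_mul_comm, ← zpow_add₀ hs0]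
  ring_nf

lemma metricCoeff_mul_self (hs0 : s ≠ 0) (hs : s ^ 2 = r) (a : Fin (bigN S n)) :
    metricCoeff S n s a * metricCoeff S n s a = r ^ twoRho S n (pr a) := by
  simp only [metricCoeff, twoRho_pr, zpow_eq_zpow_two_mul hs]
  rw [mul_mul_mul_comm, epsA_mul_self, one_mul, ← zpow_add₀ hs0]
  ring_nf

lemma epsA_pr_mul_epsA_mul_zpow (hs0 : s ≠ 0) (a c : Fin (bigN S n)) :
    epsA S n (pr a) * epsA S n c * s ^ (twoRho S n (pr a) - twoRho S n c)
      = epsC S * metricCoeff S n s a * metricCoeff S n s c := by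
  rw [metricCoeff, metricCoeff, epsA_pr, twoRho_pr, sub_eq_add_neg, zpow_add₀ hs0]
  ring

/-- The R-matrix preserves the span of the vectors `e_a ⊗ e_{a'}` and the span of the
other basis vectors. -/
lemma Rbcd_eq_zero_of_not_iff {x y c d : Fin (bigN S n)} (h : ¬(y = pr x ↔ d = pr c)) :
    Rbcd S n r s q x y c d = 0 := by
  have h₁ : kd x c * kd y d = 0 := by
    unfold kd; split_ifs with hx hy <;> first | (subst hx hy; exact absurd Iff.rfl h) | simp
  have h₂ : isN2 S n x * isN2 S n y * isN2 S n c * isN2 S n d = 0 := by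
    simp only [isN2_eq_kd_pr, kd]
    split_ifs with hx hy hc hd <;> try simp
    exact absurd ⟨fun _ => (eq_of_pr_eq_self hd.symm hc.symm).trans hc,
      fun _ => (eq_of_pr_eq_self hy.symm hx.symm).trans hx⟩ h
  have h₃ : kd y c * kd x d = 0 := by
    unfold kd; split_ifs with hy hx <;> first | (subst hx hy; exact absurd eq_pr_comm h) | simp
  have h₄ : kd y (pr x) * kd d (pr c) = 0 := by
    unfold kd; split_ifs with hy hd
    · exact absurd ⟨fun _ => hd, fun _ => hy⟩ h
    all_goals simp
  unfold Rbcd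
  linear_combination
    (r / q x y + (r - 1) * kd x y + (r⁻¹ - 1) * kd y (pr x)) * (1 - isN2 S n x) * h₁ + h₂
      + (r - r⁻¹) * (if y < x then 1 else 0) * h₃
      - (r - r⁻¹) * epsA S n x * epsA S n c * (if c < x then 1 else 0)
          * s ^ (twoRho S n x - twoRho S n c) * h₄

lemma Rbcd_pr_self_self_pr (hr : r ≠ 0) (hs0 : s ≠ 0) {a : Fin (bigN S n)} (hq : q (pr a) a = r)
    (c : Fin (bigN S n)) :
    Rbcd S n r s q (pr a) a c (pr c)
      = r⁻¹ * (1 - isN2 S n a) * kd a (pr c) + isN2 S n a * kd a c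
        + (r - r⁻¹) * ((if a < pr a then 1 else 0) * kd a c
          - epsC S * metricCoeff S n s a * metricCoeff S n s c * (if c < pr a then 1 else 0)) := by
  unfold Rbcd
  simp only [pr_pr, kd_self, isN2_pr, kd_pr_left, hq, div_self hr, ← epsA_pr_mul_epsA_mul_zpow hs0]
  linear_combination
    r⁻¹ * (1 - isN2 S n a) * kd_mul_self a (pr c)
      + kd a (pr c) * kd a (pr c) * (r - 1) * kd_pr_mul_one_sub_isN2 S n a
      + isN2 S n c * isN2 S n c * isN2_mul_self S n a + isN2 S n a * isN2_mul_self S n c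
      + isN2_mul_isN2 S n a c + (r - r⁻¹) * (if a < pr a then 1 else 0) * kd_mul_self a c

lemma sum_Cmet_mul_RbcdHat_eq_sum (c d : Fin (bigN S n)) :
    ∑ a, ∑ b, Cmet S n s a b * RbcdHat S n r s q a b c d
      = ∑ a, metricCoeff S n s a * Rbcd S n r s q (pr a) a c d := by
  refine sum_congr rfl fun a _ => ?_
  simp only [Cmet_eq_metricCoeff_mul_kd, RbcdHat, mul_right_comm (metricCoeff S n s a),
    sum_mul_kd]

lemma sum_Cup_mul_RbcdHat_eq_sum (a b : Fin (bigN S n)) :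
    ∑ c, ∑ d, Cup S n s c d * RbcdHat S n r s q a b c d
      = epsC S * ∑ c, metricCoeff S n s c * Rbcd S n r s q b a c (pr c) := by
  rw [mul_sum]
  refine sum_congr rfl fun c _ => ?_
  simp only [Cup, Cmet_eq_metricCoeff_mul_kd, RbcdHat, mul_assoc, ← mul_sum, sum_kd_mul]

lemma metricCoeff_mul_diagPart (hr : r ≠ 0) (hs0 : s ≠ 0) (hs : s ^ 2 = r) (c : Fin (bigN S n)) :
    metricCoeff S n s c * diagPart S n r c
      = r⁻¹ * (1 - isN2 S n c) * metricCoeff S n s (pr c)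
        + (isN2 S n c + (r - r⁻¹) * if c < pr c then 1 else 0) * metricCoeff S n s c := by
  rw [diagPart, metricCoeff_pr hs0 hs, zpow_sub_one₀ hr]
  simp only [Fin.lt_def, pr_val]
  ring

lemma sum_metricCoeff_mul_Rbcd_upper (hr : r ≠ 0) (hs0 : s ≠ 0) (hs : s ^ 2 = r)
    (hq : ∀ a, q (pr a) a = r) (c : Fin (bigN S n)) :
    ∑ a, metricCoeff S n s a * Rbcd S n r s q (pr a) a c (pr c)
      = metricCoeff S n s c * (diagPart S n r c - (r - r⁻¹) * epsC S * tailSum S n r c) := by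
  have hsummand : ∀ a, metricCoeff S n s a * Rbcd S n r s q (pr a) a c (pr c)
      = r⁻¹ * (1 - isN2 S n a) * metricCoeff S n s a * kd a (pr c)
        + (isN2 S n a + (r - r⁻¹) * if a < pr a then 1 else 0) * metricCoeff S n s a * kd a c
        - (r - r⁻¹) * epsC S * metricCoeff S n s c
            * (if c < pr a then r ^ twoRho S n (pr a) else 0) := by
    intro a
    rw [Rbcd_pr_self_self_pr hr hs0 (hq a), ← metricCoeff_mul_self hs0 hs]
    split_ifs <;> ring
  simp only [hsummand, sum_sub_distrib, sum_add_distrib, sum_mul_kd, ← mul_sum, isN2_pr,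
    sum_comp_pr (fun b => if c < b then r ^ twoRho S n b else 0),
    sum_ite_lt_eq_sum_Ico c (fun j => r ^ twoRho S n j)]
  rw [mul_sub (metricCoeff S n s c), metricCoeff_mul_diagPart hr hs0 hs, tailSum]
  ring

lemma sum_metricCoeff_mul_Rbcd_lower (hr : r ≠ 0) (hs0 : s ≠ 0) (hs : s ^ 2 = r)
    {a : Fin (bigN S n)} (hq : q (pr a) a = r) :
    ∑ c, metricCoeff S n s c * Rbcd S n r s q (pr a) a c (pr c)
      = metricCoeff S n s a * (diagPart S n r a - (r - r⁻¹) * epsC S * tailSum S n r a) := by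
  have hsummand : ∀ c, metricCoeff S n s c * Rbcd S n r s q (pr a) a c (pr c)
      = r⁻¹ * (1 - isN2 S n a) * metricCoeff S n s c * kd c (pr a)
        + (isN2 S n a + (r - r⁻¹) * if a < pr a then 1 else 0) * metricCoeff S n s c * kd c a
        - (r - r⁻¹) * epsC S * metricCoeff S n s a
            * (if a < pr c then r ^ twoRho S n (pr c) else 0) := by
    intro c
    rw [Rbcd_pr_self_self_pr hr hs0 hq, ← metricCoeff_mul_self hs0 hs, ← kd_pr_left, kd_comm (pr a),
      kd_comm a c]
    simp only [lt_pr_comm (a := c)]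
    split_ifs <;> ring
  simp only [hsummand, sum_sub_distrib, sum_add_distrib, sum_mul_kd, ← mul_sum,
    sum_comp_pr (fun b => if a < b then r ^ twoRho S n b else 0),
    sum_ite_lt_eq_sum_Ico a (fun j => r ^ twoRho S n j)]
  rw [mul_sub (metricCoeff S n s a), metricCoeff_mul_diagPart hr hs0 hs, tailSum]
  ring

lemma sum_Cmet_mul_RbcdHat (hr : r ≠ 0) (hs : s ^ 2 = r) (hq : ∀ a, q (pr a) a = r)
    (c d : Fin (bigN S n)) :
    ∑ a, ∑ b, Cmet S n s a b * RbcdHat S n r s q a b c d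
      = epsC S * r ^ (epsZ S - bigN S n) * Cmet S n s c d := by
  have hs0 : s ≠ 0 := ne_zero_pow two_ne_zero (hs ▸ hr)
  rw [sum_Cmet_mul_RbcdHat_eq_sum, Cmet_eq_metricCoeff_mul_kd]
  by_cases hd : d = pr c
  · subst hd
    rw [sum_metricCoeff_mul_Rbcd_upper hr hs0 hs hq, diagPart_sub_tailSum hr c.isLt, kd_self]
    ring
  · have hzero : ∀ a, Rbcd S n r s q (pr a) a c d = 0 := fun a =>
      Rbcd_eq_zero_of_not_iff fun h => hd (h.mp (pr_pr a).symm)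
    simp only [hzero, mul_zero, sum_const_zero, kd, if_neg hd]

lemma sum_Cup_mul_RbcdHat (hr : r ≠ 0) (hs : s ^ 2 = r) (hq : ∀ a, q (pr a) a = r)
    (a b : Fin (bigN S n)) :
    ∑ c, ∑ d, Cup S n s c d * RbcdHat S n r s q a b c d
      = epsC S * r ^ (epsZ S - bigN S n) * Cup S n s a b := by
  have hs0 : s ≠ 0 := ne_zero_pow two_ne_zero (hs ▸ hr)
  rw [sum_Cup_mul_RbcdHat_eq_sum, Cup, Cmet_eq_metricCoeff_mul_kd]
  by_cases hb : b = pr a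
  · subst hb
    rw [sum_metricCoeff_mul_Rbcd_lower hr hs0 hs (hq a), diagPart_sub_tailSum hr a.isLt, kd_self]
    ring
  · have hzero : ∀ c, Rbcd S n r s q b a c (pr c) = 0 := fun c =>
      Rbcd_eq_zero_of_not_iff fun h => hb (eq_pr_comm.mp (h.mpr rfl))
    simp only [hzero, mul_zero, sum_const_zero, kd, if_neg hb]

end Metric

theorem statement19_general (S : BCDSeries) (n : ℕ) (r s : ℂ) (hr : r ≠ 0) (hs : s ^ 2 = r)
    (q : Fin (bigN S n) → Fin (bigN S n) → ℂ)
    (hqaa : ∀ a, q a a = r)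
    (hqpr1 : ∀ a b, q a b * q a (pr b) = r ^ 2)
    :
    (∀ c d : Fin (bigN S n),
      (∑ a : Fin (bigN S n), ∑ b : Fin (bigN S n),
          Cmet S n s a b * RbcdHat S n r s q a b c d)
        = epsC S * r ^ (epsZ S - (bigN S n : ℤ)) * Cmet S n s c d) ∧
    (∀ a b : Fin (bigN S n),
      (∑ c : Fin (bigN S n), ∑ d : Fin (bigN S n),
          Cup S n s c d * RbcdHat S n r s q a b c d)
        = epsC S * r ^ (epsZ S - (bigN S n : ℤ)) * Cup S n s a b) := by
  have hq : ∀ a, q (pr a) a = r := fun a => by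
    have h := hqpr1 (pr a) (pr a)
    rw [hqaa, pr_pr, sq] at h
    exact mul_left_cancel₀ hr h
  exact ⟨sum_Cmet_mul_RbcdHat hr hs hq, sum_Cup_mul_RbcdHat hr hs hq⟩

/-- the metric is an eigenvector of the braiding matrix in both index
pairs: `C_{ab} R̂^{ab}_{cd} = ε r^{ε−N} C_{cd}` and `C^{cd} R̂^{ab}_{cd} = ε r^{ε−N} C^{ab}`. -/
theorem statement19 (S : BCDSeries) (n : ℕ) (r s : ℂ) (hr : r ≠ 0) (hs : s ^ 2 = r)
    (q : Fin (bigN S n) → Fin (bigN S n) → ℂ)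
    (hq0 : ∀ a b, q a b ≠ 0)
    (hqaa : ∀ a, q a a = r)
    (hqsym : ∀ a b, q b a * q a b = r ^ 2)
    (hqpr1 : ∀ a b, q a b * q a (pr b) = r ^ 2)
    (hqpr2 : ∀ a b, q a b * q (pr a) b = r ^ 2)
    (hqpr3 : ∀ a b, q a b = q (pr a) (pr b))
    :
    (∀ c d : Fin (bigN S n),
      (∑ a : Fin (bigN S n), ∑ b : Fin (bigN S n),
          Cmet S n s a b * RbcdHat S n r s q a b c d)
        = epsC S * r ^ (epsZ S - (bigN S n : ℤ)) * Cmet S n s c d) ∧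
    (∀ a b : Fin (bigN S n),
      (∑ c : Fin (bigN S n), ∑ d : Fin (bigN S n),
          Cup S n s c d * RbcdHat S n r s q a b c d)
        = epsC S * r ^ (epsZ S - (bigN S n : ℤ)) * Cup S n s a b) :=
  statement19_general S n r s hr hs q hqaa hqpr1
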